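/- Let ψ : ℝ → ℝ be nonnegative, even, supported in (−1,1), with ∫_ℝ ψ = 1, and for δ > 0 set ψ_δ(r) = δ⁻¹·ψ(r/δ). Then for all real numbers a, b, every N > 0 and every δ > 0, | ∫_{−N}^{N} 1_{a>ξ} · ( ∫_{−N}^{N} ψ_δ(ξ − ζ)·(1_{b≤ξ} − 1_{b≤ζ}) dζ ) dξ | ≤ δ. -/

import Mathlib

/-! The inner integral vanishes unless `ξ` lies within `δ` of `b`: the jump
`1_{b≤ξ} − 1_{b≤ζ}` is nonzero only when `ζ` and `ξ` lie on opposite sides of `b`, while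
`ψ_δ(ξ − ζ) ≠ 0` forces `|ξ − ζ| < δ`. The same sign information confines `ξ − ζ` to a half-line,
so the inner integral is bounded by the mass of `ψ_δ` on a half-line, which is `1/2` by evenness.
The outer integrand is therefore bounded by `1/2` on an interval of length `2δ` and vanishes
elsewhere. -/

open MeasureTheory Set

section EvenKernel

variable {φ : ℝ → ℝ}

lemma integral_Ioi_zero_of_even (heven : ∀ r, φ (-r) = φ r) :
    ∫ t in Ioi 0, φ t = (∫ t, φ t) / 2 := by
  have habs : ∀ t, φ |t| = φ t := fun t => by
    rcases abs_choice t with h | h <;> rw [h]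
    exact heven t
  calc ∫ t in Ioi 0, φ t = (∫ t, φ |t|) / 2 := by rw [integral_comp_abs]; ring
    _ = (∫ t, φ t) / 2 := by simp only [habs]

lemma integral_Iio_zero_of_even (heven : ∀ r, φ (-r) = φ r) :
    ∫ t in Iio 0, φ t = (∫ t, φ t) / 2 := by
  rw [← integral_Iic_eq_integral_Iio, ← neg_zero, ← integral_comp_neg_Ioi]
  simp only [heven]
  exact integral_Ioi_zero_of_even heven

end EvenKernel

lemma abs_intervalIntegral_le_integral_of_abs_le {f g : ℝ → ℝ} {l u : ℝ} (hlu : l ≤ u)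
    (hg : Integrable g) (hfg : ∀ x, |f x| ≤ g x) :
    |∫ x in l..u, f x| ≤ ∫ x, g x := by
  rw [intervalIntegral.integral_of_le hlu]
  calc |∫ x in Ioc l u, f x| ≤ ∫ x in Ioc l u, g x :=
        norm_integral_le_of_norm_le hg.integrableOn
          (ae_of_all _ fun x => (Real.norm_eq_abs _).trans_le (hfg x))
    _ ≤ ∫ x, g x :=
        setIntegral_le_integral hg (ae_of_all _ fun x => (abs_nonneg _).trans (hfg x))

lemma abs_intervalIntegral_le_of_abs_le_of_eq_zero_off_Ioo {f : ℝ → ℝ} {l u c d C : ℝ}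
    (hlu : l ≤ u) (hcd : c ≤ d) (hf : ∀ x, |f x| ≤ C) (hf0 : ∀ x ∉ Ioo c d, f x = 0) :
    |∫ x in l..u, f x| ≤ C * (d - c) := by
  have hg : Integrable ((Ioo c d).indicator fun _ => C) :=
    (integrableOn_const measure_Ioo_lt_top.ne).integrable_indicator measurableSet_Ioo
  calc |∫ x in l..u, f x| ≤ ∫ x, (Ioo c d).indicator (fun _ => C) x := by
        refine abs_intervalIntegral_le_integral_of_abs_le hlu hg fun x => ?_
        by_cases hx : x ∈ Ioo c d
        · simpa [hx] using hf x
        · simp [hx, hf0 x hx]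
    _ = C * (d - c) := by
        rw [integral_indicator_const _ measurableSet_Ioo, measureReal_def, Real.volume_Ioo,
          ENNReal.toReal_ofReal (sub_nonneg.2 hcd), smul_eq_mul, mul_comm]

section Kernel

variable {φ : ℝ → ℝ} {l u : ℝ}

lemma abs_intervalIntegral_kernel_mul_le {c : ℝ → ℝ} {s : Set ℝ} (ξ : ℝ) (hlu : l ≤ u)
    (hφ0 : ∀ r, 0 ≤ φ r) (hφ : Integrable φ) (hs : MeasurableSet s) (hc : ∀ ζ, |c ζ| ≤ 1)
    (hcs : ∀ ζ, c ζ ≠ 0 → ξ - ζ ∈ s) :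
    |∫ ζ in l..u, φ (ξ - ζ) * c ζ| ≤ ∫ t in s, φ t := by
  have hdom : ∀ ζ, |φ (ξ - ζ) * c ζ| ≤ s.indicator φ (ξ - ζ) := fun ζ => by
    by_cases hζ : c ζ = 0
    · rw [hζ, mul_zero, abs_zero]
      exact indicator_nonneg (fun r _ => hφ0 r) _
    · rw [indicator_of_mem (hcs ζ hζ), abs_mul, abs_of_nonneg (hφ0 _)]
      exact mul_le_of_le_one_right (hφ0 _) (hc ζ)
  calc |∫ ζ in l..u, φ (ξ - ζ) * c ζ| ≤ ∫ ζ, s.indicator φ (ξ - ζ) :=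
        abs_intervalIntegral_le_integral_of_abs_le hlu ((hφ.indicator hs).comp_sub_left ξ) hdom
    _ = ∫ t, s.indicator φ t := integral_sub_left_eq_self _ _ ξ
    _ = ∫ t in s, φ t := integral_indicator hs

lemma abs_intervalIntegral_kernel_mul_jump_le (hlu : l ≤ u) (hφ0 : ∀ r, 0 ≤ φ r)
    (heven : ∀ r, φ (-r) = φ r) (hφ : Integrable φ) (b ξ : ℝ) :
    |∫ ζ in l..u, φ (ξ - ζ) * ((if b ≤ ξ then (1 : ℝ) else 0) - (if b ≤ ζ then (1 : ℝ) else 0))|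
      ≤ (∫ t, φ t) / 2 := by
  have hjump : ∀ ζ, |(if b ≤ ξ then (1 : ℝ) else 0) - (if b ≤ ζ then (1 : ℝ) else 0)| ≤ 1 :=
    fun ζ => by split_ifs <;> norm_num
  by_cases hbξ : b ≤ ξ
  · rw [← integral_Ioi_zero_of_even heven]
    refine abs_intervalIntegral_kernel_mul_le ξ hlu hφ0 hφ measurableSet_Ioi hjump fun ζ hζ => ?_
    have hζb : ζ < b := not_le.1 fun h => hζ (by simp [hbξ, h])
    exact sub_pos.2 (hζb.trans_le hbξ)
  · rw [← integral_Iio_zero_of_even heven]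
    refine abs_intervalIntegral_kernel_mul_le ξ hlu hφ0 hφ measurableSet_Iio hjump fun ζ hζ => ?_
    have hbζ : b ≤ ζ := not_lt.1 fun h => hζ (by simp [hbξ, h.not_ge])
    exact sub_neg.2 ((not_le.1 hbξ).trans_le hbζ)

lemma kernel_mul_jump_eq_zero {δ b ξ : ℝ} (hsupp : ∀ r, δ ≤ |r| → φ r = 0)
    (hξ : ξ ∉ Ioo (b - δ) (b + δ)) (ζ : ℝ) :
    φ (ξ - ζ) * ((if b ≤ ξ then (1 : ℝ) else 0) - (if b ≤ ζ then (1 : ℝ) else 0)) = 0 := by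
  rw [mem_Ioo, not_and_or, not_lt, not_lt] at hξ
  have hle_abs := le_abs_self (ξ - ζ)
  have hneg_le_abs := neg_le_abs (ξ - ζ)
  split_ifs with hbξ hbζ hbζ <;> try simp only [sub_self, mul_zero]
  · rw [hsupp _ (by rcases hξ with h | h <;> linarith [not_le.1 hbζ]), zero_mul]
  · rw [hsupp _ (by rcases hξ with h | h <;> linarith [not_le.1 hbξ]), zero_mul]

end Kernel

section Rescaling

variable {ψ : ℝ → ℝ} {δ : ℝ}

lemma integral_inv_mul_comp_div (hδ : 0 < δ) :
    ∫ t, δ⁻¹ * ψ (t / δ) = ∫ t, ψ t := by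
  rw [integral_const_mul, Measure.integral_comp_div, abs_of_pos hδ, smul_eq_mul,
    inv_mul_cancel_left₀ hδ.ne']

lemma inv_mul_comp_div_eq_zero (hsupp : ∀ r, r ∉ Ioo (-1 : ℝ) 1 → ψ r = 0) (hδ : 0 < δ)
    {t : ℝ} (ht : δ ≤ |t|) : δ⁻¹ * ψ (t / δ) = 0 := by
  have hfar : 1 ≤ |t / δ| := by rwa [abs_div, abs_of_pos hδ, one_le_div hδ]
  rw [hsupp _ fun h => (abs_lt.2 h).not_ge hfar, mul_zero]

end Rescaling

/-- For a standard mollifier `ψ` and its rescaling `ψ_δ(r) = δ⁻¹·ψ(r/δ)`, for all real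
`a, b`, `N > 0` and `δ > 0`:
`| ∫_{−N}^{N} 1_{a>ξ} ( ∫_{−N}^{N} ψ_δ(ξ−ζ)·(1_{b≤ξ} − 1_{b≤ζ}) dζ ) dξ | ≤ δ`. -/
theorem stmt_10 (ψ : ℝ → ℝ) (hψ_nonneg : ∀ r : ℝ, 0 ≤ ψ r)
    (hψ_even : ∀ r : ℝ, ψ (-r) = ψ r)
    (hψ_supp : ∀ r : ℝ, r ∉ Set.Ioo (-1 : ℝ) 1 → ψ r = 0)
    (hψ_int : ∫ r : ℝ, ψ r = 1)
    (a b N δ : ℝ) (hN : 0 < N) (hδ : 0 < δ) :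
    |∫ ξ in (-N)..N, (if a > ξ then (1 : ℝ) else 0) *
        ∫ ζ in (-N)..N, δ⁻¹ * ψ ((ξ - ζ) / δ) *
          ((if b ≤ ξ then (1 : ℝ) else 0) - (if b ≤ ζ then (1 : ℝ) else 0))| ≤ δ := by
  set Ψ : ℝ → ℝ := fun t => δ⁻¹ * ψ (t / δ)
  have hΨ_int : Integrable Ψ :=
    ((Integrable.of_integral_ne_zero (hψ_int ▸ one_ne_zero)).comp_div hδ.ne').const_mul _
  have hinner : ∀ ξ, |∫ ζ in (-N)..N, Ψ (ξ - ζ) *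
      ((if b ≤ ξ then (1 : ℝ) else 0) - (if b ≤ ζ then (1 : ℝ) else 0))| ≤ 1 / 2 := fun ξ => by
    refine (abs_intervalIntegral_kernel_mul_jump_le (neg_le_self hN.le)
      (fun r => mul_nonneg (inv_nonneg.2 hδ.le) (hψ_nonneg _))
      (fun r => by simp only [neg_div, hψ_even]) hΨ_int b ξ).trans_eq ?_
    rw [integral_inv_mul_comp_div hδ, hψ_int]
  have hvanish : ∀ ξ ∉ Ioo (b - δ) (b + δ), ∫ ζ in (-N)..N, Ψ (ξ - ζ) *
      ((if b ≤ ξ then (1 : ℝ) else 0) - (if b ≤ ζ then (1 : ℝ) else 0)) = 0 := fun ξ hξ => by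
    rw [intervalIntegral.integral_congr (g := fun _ => 0) fun ζ _ =>
      kernel_mul_jump_eq_zero (φ := Ψ) (fun r => inv_mul_comp_div_eq_zero hψ_supp hδ) hξ ζ]
    exact intervalIntegral.integral_zero
  calc _ ≤ 1 / 2 * (b + δ - (b - δ)) :=
        abs_intervalIntegral_le_of_abs_le_of_eq_zero_off_Ioo (neg_le_self hN.le) (by linarith)
          (fun ξ => by
            rw [abs_mul]
            refine (mul_le_of_le_one_left (abs_nonneg _) ?_).trans (hinner ξ)
            split_ifs <;> norm_num)
          (fun ξ hξ => by rw [hvanish ξ hξ, mul_zero])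
    _ = δ := by ring
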